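/- Let P = con(C) ⊆ ℝⁿ with C a finite set of equalities, non-strict and strict linear inequalities, and suppose P ≠ ∅. Then cl(P) = con(C'), where C' replaces every strict inequality aᵀx > b in C by aᵀx ≥ b. -/

import Mathlib

/-!
The relaxed constraints define a closed set containing `con(C)`. Conversely, if `q` satisfies
the relaxed constraints and `p ∈ con(C)`, every point of the open segment `(q, p)` puts positive
weight on `p`, so it satisfies each strict inequality strictly; hence `q` is a limit of points
of `con(C)`.
-/

/-- Kinds of linear constraints. -/
inductive CKind | eq | ge | gt
deriving DecidableEq

/-- Satisfaction of a linear constraint `(a, b, k)`. -/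
def SatC {n : ℕ} (p : Fin n → ℝ) (c : (Fin n → ℝ) × ℝ × CKind) : Prop :=
  match c.2.2 with
  | .eq => (∑ i, c.1 i * p i) = c.2.1
  | .ge => (∑ i, c.1 i * p i) ≥ c.2.1
  | .gt => (∑ i, c.1 i * p i) > c.2.1

/-- Satisfaction of the relaxation of a constraint, where a strict inequality
is replaced by the corresponding non-strict one. -/
def SatRelaxC {n : ℕ} (p : Fin n → ℝ) (c : (Fin n → ℝ) × ℝ × CKind) : Prop :=
  match c.2.2 with
  | .eq => (∑ i, c.1 i * p i) = c.2.1
  | .ge => (∑ i, c.1 i * p i) ≥ c.2.1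
  | .gt => (∑ i, c.1 i * p i) ≥ c.2.1

theorem satRelaxC_of_satC {n : ℕ} {p : Fin n → ℝ} {c : (Fin n → ℝ) × ℝ × CKind}
    (h : SatC p c) : SatRelaxC p c := by
  obtain ⟨a, b, _ | _ | _⟩ := c
  exacts [h, h, le_of_lt h]

theorem isClosed_setOf_satRelaxC {n : ℕ} (c : (Fin n → ℝ) × ℝ × CKind) :
    IsClosed {p : Fin n → ℝ | SatRelaxC p c} := by
  obtain ⟨a, b, _ | _ | _⟩ := c
  · exact isClosed_eq (by fun_prop) continuous_const
  · exact isClosed_le continuous_const (by fun_prop)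
  · exact isClosed_le continuous_const (by fun_prop)

theorem satC_of_mem_openSegment {n : ℕ} {q p z : Fin n → ℝ} {c : (Fin n → ℝ) × ℝ × CKind}
    (hq : SatRelaxC q c) (hp : SatC p c) (hz : z ∈ openSegment ℝ q p) : SatC z c := by
  obtain ⟨s, t, hs, ht, hst, rfl⟩ := hz
  obtain ⟨a, b, k⟩ := c
  have hsum : ∑ i, a i * (s • q + t • p) i = s * ∑ i, a i * q i + t * ∑ i, a i * p i := by
    simp only [Pi.add_apply, Pi.smul_apply, smul_eq_mul, mul_add, Finset.sum_add_distrib,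
      Finset.mul_sum, mul_left_comm]
  have hb : s * b + t * b = b := by rw [← add_mul, hst, one_mul]
  cases k <;> simp only [SatC, SatRelaxC] at hq hp ⊢ <;> rw [hsum]
  · rw [hq, hp, hb]
  · linarith [mul_le_mul_of_nonneg_left hq hs.le, mul_le_mul_of_nonneg_left hp ht.le]
  · linarith [mul_le_mul_of_nonneg_left hq hs.le, mul_lt_mul_of_pos_left hp ht]

theorem closure_eq_relaxed {n : ℕ} (C : Finset ((Fin n → ℝ) × ℝ × CKind))
    (hne : {p : Fin n → ℝ | ∀ c ∈ C, SatC p c}.Nonempty) :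
    closure {p : Fin n → ℝ | ∀ c ∈ C, SatC p c} =
      {p : Fin n → ℝ | ∀ c ∈ C, SatRelaxC p c} := by
  refine Set.Subset.antisymm ?_ ?_
  · have hclosed : IsClosed {p : Fin n → ℝ | ∀ c ∈ C, SatRelaxC p c} := by
      simp only [Set.ofPred_forall]
      exact isClosed_biInter fun c _ => isClosed_setOf_satRelaxC c
    exact closure_minimal (fun p hp c hc => satRelaxC_of_satC (hp c hc)) hclosed
  · intro q hq
    obtain ⟨p, hp⟩ := hne
    have hseg : openSegment ℝ q p ⊆ {p : Fin n → ℝ | ∀ c ∈ C, SatC p c} :=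
      fun z hz c hc => satC_of_mem_openSegment (hq c hc) (hp c hc) hz
    exact closure_mono hseg (segment_subset_closure_openSegment (left_mem_segment ℝ q p))
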